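/- arXiv:1907.01808 — 12 statements merged into one kernel-verified Lean document; each statement's English description precedes it below -/
import Mathlib

section
/- Let f = (α_f, σ_f) ∈ G_n and let τ ∈ Sₙ be an involution with τ σ_f τ⁻¹ = σ_f⁻¹. Then there exists an involution T ∈ G_n whose permutation part is τ and which reverses f (i.e. T² = identity, σ_T = τ and T f T⁻¹ = f⁻¹) if and only if for every i ∈ {1,…,n} one has ∑_{j ∈ S_i} α_j(f) + ∑_{j ∈ τ(S_i)} α_j(f) = 0 in 𝕋, where S_i denotes the σ_f-cycle of i. -/
abbrev Circle1 : Type := AddCircle (1 : ℝ)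

abbrev Gn (n : ℕ) : Type := (Fin n → Circle1) × Equiv.Perm (Fin n)

namespace Gn
variable {n : ℕ}

noncomputable instance : Mul (Gn n) := ⟨fun f g => ⟨fun j => g.1 j + f.1 (g.2 j), f.2 * g.2⟩⟩
noncomputable instance : One (Gn n) := ⟨⟨fun _ => 0, 1⟩⟩
noncomputable instance : Inv (Gn n) := ⟨fun f => ⟨fun j => -f.1 (f.2⁻¹ j), f.2⁻¹⟩⟩

noncomputable instance : Group (Gn n) where
  mul_assoc f g h := Prod.ext (funext fun j => (add_assoc _ _ _).symm) rfl
  one_mul f := Prod.ext (funext fun j => add_zero _) (one_mul _)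
  mul_one f := Prod.ext (funext fun j => zero_add _) (mul_one _)
  inv_mul_cancel f := Prod.ext
    (funext fun j => show f.1 j + -f.1 (f.2⁻¹ (f.2 j)) = 0 by simp)
    (inv_mul_cancel _)

@[simp] lemma mul_fst (f g : Gn n) (j : Fin n) : (f * g).1 j = g.1 j + f.1 (g.2 j) := rfl
@[simp] lemma mul_snd (f g : Gn n) : (f * g).2 = f.2 * g.2 := rfl
@[simp] lemma one_fst (j : Fin n) : (1 : Gn n).1 j = 0 := rfl
@[simp] lemma one_snd : (1 : Gn n).2 = 1 := rfl
@[simp] lemma inv_fst (f : Gn n) (j : Fin n) : (f⁻¹).1 j = -f.1 (f.2⁻¹ j) := rfl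
@[simp] lemma inv_snd (f : Gn n) : (f⁻¹).2 = f.2⁻¹ := rfl


/-- The σ-cycle of `i`: the set `{σ^k i : k ∈ ℤ}` as a finset. -/
noncomputable def cycleFinset (σ : Equiv.Perm (Fin n)) (i : Fin n) : Finset (Fin n) :=
  @Finset.filter _ (fun j => ∃ k : ℤ, (σ ^ k) i = j) (Classical.decPred _) Finset.univ

end Gn

/-!
Writing `T = (β, τ)` and `c j = -(α_j(f) + α_{σ⁻¹(τ j)}(f))`, the involution `T` reverses `f`
exactly when `β ∘ τ = -β` and `β ∘ σ = β + c`. Summing the second equation over a `σ`-cycle shows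
that `c` has zero cycle sums, which is the stated condition. Conversely, zero cycle sums let one
solve `γ ∘ σ = γ + c` by summing `c` along each cycle from a base point; `e = γ + γ ∘ τ` is then
invariant under `σ` and `τ`, and subtracting from `γ` a `σ`-invariant `ε` with
`ε + ε ∘ τ = e` (halving `e` on `τ`-stable cycles, using divisibility of `𝕋`) gives `β`.
-/

open Equiv Finset Function

namespace Gn

variable {n : ℕ} {σ τ : Perm (Fin n)}

lemma mem_cycleFinset {i j : Fin n} : j ∈ cycleFinset σ i ↔ σ.SameCycle i j := by
  simp [cycleFinset, Perm.SameCycle]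

lemma cycleFinset_eq_of_sameCycle {i j : Fin n} (h : σ.SameCycle i j) :
    cycleFinset σ i = cycleFinset σ j := by
  ext x
  simp only [mem_cycleFinset]
  exact ⟨h.symm.trans, h.trans⟩

lemma sameCycle_apply_iff_of_conj_eq_inv (hrev : τ * σ * τ⁻¹ = σ⁻¹) {x y : Fin n} :
    σ.SameCycle (τ x) (τ y) ↔ σ.SameCycle x y := by
  rw [← Perm.sameCycle_inv, ← hrev, Perm.sameCycle_conj]
  simp

lemma involutive_of_mul_self_eq_one (hτ : τ * τ = 1) : Involutive τ :=
  fun j => by rw [← Perm.mul_apply, hτ, Perm.one_apply]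

lemma apply_apply_of_conj_eq_inv (hrev : τ * σ * τ⁻¹ = σ⁻¹) (x : Fin n) :
    τ (σ x) = σ⁻¹ (τ x) := by
  rw [← Perm.mul_apply, mul_inv_eq_iff_eq_mul.1 hrev, Perm.mul_apply]

lemma inv_apply_apply_involutive (hτ : τ * τ = 1) (hrev : τ * σ * τ⁻¹ = σ⁻¹) :
    Involutive fun x => σ⁻¹ (τ x) := fun x => by
  dsimp only
  rw [← apply_apply_of_conj_eq_inv hrev, Perm.coe_inv, apply_symm_apply,
    involutive_of_mul_self_eq_one hτ x]

lemma image_cycleFinset_of_conj_eq_inv (hrev : τ * σ * τ⁻¹ = σ⁻¹) (i : Fin n) :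
    (cycleFinset σ i).image τ = cycleFinset σ (τ i) := by
  ext x
  obtain ⟨y, rfl⟩ := τ.surjective x
  simp [mem_cycleFinset, sameCycle_apply_iff_of_conj_eq_inv hrev]

lemma cycleFinset_inv (σ : Perm (Fin n)) (i : Fin n) : cycleFinset σ⁻¹ i = cycleFinset σ i := by
  ext
  simp [mem_cycleFinset]

lemma min_cycleFinset_eq_iff {x y : Fin n} :
    (cycleFinset σ x).min = (cycleFinset σ y).min ↔ σ.SameCycle x y := by
  refine ⟨fun h => ?_, fun h => by rw [cycleFinset_eq_of_sameCycle h]⟩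
  obtain ⟨m, hm⟩ := Finset.min_of_mem (mem_cycleFinset.2 (Perm.SameCycle.refl σ x))
  have hmx := mem_cycleFinset.1 (mem_of_min hm)
  have hmy := mem_cycleFinset.1 (mem_of_min (h ▸ hm))
  exact hmx.trans hmy.symm

lemma apply_eq_of_sameCycle {β : Type*} {g : Fin n → β} (hg : ∀ j, g (σ j) = g j) {x y : Fin n}
    (h : σ.SameCycle x y) : g x = g y := by
  obtain ⟨k, rfl⟩ := h.exists_nat_pow_eq
  clear h
  induction k with
  | zero => rfl
  | succ k ih => rw [pow_succ', Perm.mul_apply, hg, ih]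

section Sums

variable {M : Type*} [AddCommMonoid M]

lemma sum_cycleFinset_comp_apply (σ : Perm (Fin n)) (i : Fin n) (g : Fin n → M) :
    ∑ j ∈ cycleFinset σ i, g (σ j) = ∑ j ∈ cycleFinset σ i, g j :=
  sum_equiv σ (fun _ => by simp [mem_cycleFinset]) (fun _ _ => rfl)

lemma sum_range_minimalPeriod (σ : Perm (Fin n)) (x : Fin n) (g : Fin n → M) :
    ∑ m ∈ range (minimalPeriod σ x), g ((σ ^ m) x) = ∑ j ∈ cycleFinset σ x, g j := by
  have hpos := minimalPeriod_pos_of_mem_periodicPts (σ.injective.mem_periodicPts x)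
  refine sum_nbij (fun m => (σ ^ m) x) (fun m _ => mem_cycleFinset.2 ⟨m, by simp⟩) ?_ ?_
    (fun _ _ => rfl)
  · intro a ha b hb hab
    simp only [coe_range, Perm.coe_pow] at ha hb hab
    exact iterate_injOn_Iio_minimalPeriod ha hb hab
  · intro y hy
    obtain ⟨k, rfl⟩ := (mem_cycleFinset.1 hy).exists_nat_pow_eq
    exact ⟨k % minimalPeriod σ x, by simpa using Nat.mod_lt k hpos,
      by simp only [Perm.coe_pow, iterate_mod_minimalPeriod_eq]⟩

lemma sum_cycleFinset_add_sum_image (hrev : τ * σ * τ⁻¹ = σ⁻¹) (α : Fin n → M) (i : Fin n) :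
    ∑ j ∈ cycleFinset σ i, (α j + α (σ⁻¹ (τ j))) =
      (∑ j ∈ cycleFinset σ i, α j) + ∑ j ∈ (cycleFinset σ i).image τ, α j := by
  have hτS := image_cycleFinset_of_conj_eq_inv hrev i
  calc ∑ j ∈ cycleFinset σ i, (α j + α (σ⁻¹ (τ j)))
      = (∑ j ∈ cycleFinset σ i, α j) + ∑ j ∈ (cycleFinset σ i).image τ, α (σ⁻¹ j) := by
        rw [sum_add_distrib, sum_image fun _ _ _ _ h => τ.injective h]
    _ = (∑ j ∈ cycleFinset σ i, α j) + ∑ j ∈ (cycleFinset σ i).image τ, α j := by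
        rw [hτS, ← cycleFinset_inv σ (τ i), sum_cycleFinset_comp_apply]

end Sums

section Coboundary

variable {A : Type*} [AddCommGroup A] {c : Fin n → A}

lemma sum_cycleFinset_eq_zero_of_apply_eq_add {γ : Fin n → A} (hγ : ∀ j, γ (σ j) = γ j + c j)
    (i : Fin n) : ∑ j ∈ cycleFinset σ i, c j = 0 := by
  have hc : ∀ j, c j = γ (σ j) - γ j := fun j => by rw [hγ]; abel
  simp only [hc, sum_sub_distrib, sum_cycleFinset_comp_apply, sub_self]

lemma periodic_sum_range_of_sum_cycleFinset_eq_zero (hc : ∀ i, ∑ j ∈ cycleFinset σ i, c j = 0)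
    (x : Fin n) :
    Periodic (fun k => ∑ m ∈ range k, c ((σ ^ m) x)) (minimalPeriod σ x) := by
  intro k
  have hshift : ∀ m, (σ ^ (k + m)) x = (σ ^ m) ((σ ^ k) x) := fun m => by
    rw [add_comm, pow_add, Perm.mul_apply]
  have hperiod : minimalPeriod σ ((σ ^ k) x) = minimalPeriod σ x := by
    rw [Perm.coe_pow, minimalPeriod_apply_iterate (σ.injective.mem_periodicPts x)]
  simp only [sum_range_add, hshift, ← hperiod, sum_range_minimalPeriod, hc, add_zero]

lemma sum_range_congr_of_pow_apply_eq (hc : ∀ i, ∑ j ∈ cycleFinset σ i, c j = 0) {x : Fin n}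
    {a b : ℕ} (h : (σ ^ a) x = (σ ^ b) x) :
    ∑ m ∈ range a, c ((σ ^ m) x) = ∑ m ∈ range b, c ((σ ^ m) x) := by
  have hper := periodic_sum_range_of_sum_cycleFinset_eq_zero hc x
  have hpos := minimalPeriod_pos_of_mem_periodicPts (σ.injective.mem_periodicPts x)
  have hmod : a % minimalPeriod σ x = b % minimalPeriod σ x := by
    refine iterate_injOn_Iio_minimalPeriod (Nat.mod_lt a hpos) (Nat.mod_lt b hpos) ?_
    simpa only [iterate_mod_minimalPeriod_eq, Perm.coe_pow] using h
  rw [← hper.map_mod_nat a, ← hper.map_mod_nat b, hmod]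

theorem exists_apply_eq_add_iff :
    (∃ γ : Fin n → A, ∀ j, γ (σ j) = γ j + c j) ↔ ∀ i, ∑ j ∈ cycleFinset σ i, c j = 0 := by
  refine ⟨fun ⟨γ, hγ⟩ => sum_cycleFinset_eq_zero_of_apply_eq_add hγ, fun hc => ?_⟩
  let r : Fin n → Fin n := fun j => (Quotient.mk (Perm.SameCycle.setoid σ) j).out
  have hr : ∀ j, r (σ j) = r j := fun j =>
    congrArg Quotient.out (Quotient.sound (Perm.sameCycle_apply_left.2 (Perm.SameCycle.refl σ j)))
  have hrk : ∀ j, ∃ k : ℕ, (σ ^ k) (r j) = j := fun j =>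
    (Quotient.mk_out (s := Perm.SameCycle.setoid σ) j).exists_nat_pow_eq
  choose k hk using hrk
  refine ⟨fun j => ∑ m ∈ range (k j), c ((σ ^ m) (r j)), fun j => ?_⟩
  have hkσ : (σ ^ k (σ j)) (r j) = (σ ^ (k j + 1)) (r j) := by
    rw [← hr, hk, pow_succ', Perm.mul_apply, hr, hk]
  simp only [hr, sum_range_congr_of_pow_apply_eq hc hkσ, sum_range_succ, hk]

end Coboundary

lemma _root_.Function.Involutive.exists_add_comp_eq {X K A : Type*} [LinearOrder K]
    [AddCommGroup A] (hhalf : ∀ a : A, ∃ b, b + b = a) {t : X → X} (ht : Involutive t) (key : X → K)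
    (hkey : ∀ x y, key x = key y → key (t x) = key (t y)) {e : X → A} (he : ∀ x, e (t x) = e x)
    (hekey : ∀ x y, key x = key y → e x = e y) :
    ∃ ε : X → A, (∀ x, ε (t x) + ε x = e x) ∧ ∀ x y, key x = key y → ε x = ε y := by
  choose half hhalf using hhalf
  classical
  refine ⟨fun x => if key (t x) = key x then half (e x) else if key x < key (t x) then e x else 0,
    fun x => ?_, fun x y hxy => by simp only [hxy, hkey x y hxy, hekey x y hxy]⟩
  simp only [ht x]
  -- a `t`-stable class gets half of `e`; of two classes swapped by `t`, the smaller gets all of it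
  by_cases h : key (t x) = key x
  · simp [h, he, hhalf]
  · rcases lt_or_gt_of_ne h with h' | h' <;> simp [h, Ne.symm h, h', not_lt_of_gt h', he]

theorem exists_antisymm_apply_eq_add {A : Type*} [AddCommGroup A]
    (hhalf : ∀ a : A, ∃ b, b + b = a) (hτ : τ * τ = 1) (hrev : τ * σ * τ⁻¹ = σ⁻¹)
    {c : Fin n → A} (hcτ : ∀ j, c (σ⁻¹ (τ j)) = c j)
    (hc : ∀ i, ∑ j ∈ cycleFinset σ i, c j = 0) :
    ∃ β : Fin n → A, (∀ j, β (τ j) + β j = 0) ∧ ∀ j, β (σ j) = β j + c j := by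
  have hτinv := involutive_of_mul_self_eq_one hτ
  have hτσ := apply_apply_of_conj_eq_inv hrev
  obtain ⟨γ, hγ⟩ := exists_apply_eq_add_iff.2 hc
  set e : Fin n → A := fun j => γ j + γ (τ j) with he
  have heτ : ∀ j, e (τ j) = e j := fun j => by simp only [he, hτinv j, add_comm]
  have heσ : ∀ j, e (σ j) = e j := fun j => by
    have := hγ (σ⁻¹ (τ j))
    rw [Perm.coe_inv, apply_symm_apply, ← Perm.coe_inv, hcτ] at this
    simp only [he, hγ, hτσ, this]
    abel
  obtain ⟨ε, hετ, hεkey⟩ := hτinv.exists_add_comp_eq hhalf (fun j => (cycleFinset σ j).min)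
    (fun x y h => by
      rwa [min_cycleFinset_eq_iff, sameCycle_apply_iff_of_conj_eq_inv hrev,
        ← min_cycleFinset_eq_iff])
    heτ (fun x y h => apply_eq_of_sameCycle heσ (min_cycleFinset_eq_iff.1 h))
  refine ⟨γ - ε, fun j => ?_, fun j => ?_⟩
  · calc (γ - ε) (τ j) + (γ - ε) j = e j - (ε (τ j) + ε j) := by
          simp only [he, Pi.sub_apply]; abel
      _ = 0 := by rw [hετ, sub_self]
  · have hεσ : ε (σ j) = ε j :=
      hεkey _ _ (min_cycleFinset_eq_iff.2 (Perm.sameCycle_apply_left.2 (Perm.SameCycle.refl σ j)))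
    simp only [Pi.sub_apply, hγ, hεσ]
    abel

lemma mul_self_eq_one_iff (T : Gn n) :
    T * T = 1 ↔ T.2 * T.2 = 1 ∧ ∀ j, T.1 (T.2 j) + T.1 j = 0 := by
  simp [Prod.ext_iff, funext_iff, add_comm, and_comm]

lemma mul_mul_inv_eq_inv_iff (T f : Gn n) :
    T * f * T⁻¹ = f⁻¹ ↔ T.2 * f.2 * T.2⁻¹ = f.2⁻¹ ∧
      ∀ j, T.1 (f.2 j) = T.1 j + -(f.1 j + f.1 (f.2⁻¹ (T.2 j))) := by
  rw [mul_inv_eq_iff_eq_mul, Prod.ext_iff, funext_iff, and_comm, mul_inv_eq_iff_eq_mul]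
  refine and_congr Iff.rfl (forall_congr' fun j => ?_)
  simp only [mul_fst, inv_fst, neg_add, ← add_assoc, eq_add_neg_iff_add_eq, add_comm (f.1 j)]

end Gn

theorem stmt0_general {n : ℕ} (f : Gn n) (τ : Equiv.Perm (Fin n))
    (hτinv : τ * τ = 1) (hτrev : τ * f.2 * τ⁻¹ = f.2⁻¹) :
    (∃ T : Gn n, T * T = 1 ∧ T.2 = τ ∧ T * f * T⁻¹ = f⁻¹) ↔
      ∀ i : Fin n,
        (∑ j ∈ Gn.cycleFinset f.2 i, f.1 j) +
          ∑ j ∈ (Gn.cycleFinset f.2 i).image τ, f.1 j = 0 := by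
  set c : Fin n → Circle1 := fun j => -(f.1 j + f.1 (f.2⁻¹ (τ j))) with hc
  have hsum : ∀ i, ∑ j ∈ Gn.cycleFinset f.2 i, c j =
      -((∑ j ∈ Gn.cycleFinset f.2 i, f.1 j) + ∑ j ∈ (Gn.cycleFinset f.2 i).image τ, f.1 j) :=
    fun i => by rw [sum_neg_distrib, Gn.sum_cycleFinset_add_sum_image hτrev]
  simp only [← neg_eq_zero (a := _ + _), ← hsum]
  constructor
  · rintro ⟨T, -, rfl, hT⟩
    exact Gn.sum_cycleFinset_eq_zero_of_apply_eq_add ((Gn.mul_mul_inv_eq_inv_iff T f).1 hT).2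
  · intro hcycle
    have hcτ : ∀ j, c (f.2⁻¹ (τ j)) = c j := fun j => by
      simp only [hc, Gn.inv_apply_apply_involutive hτinv hτrev j, add_comm]
    have hhalf : ∀ a : Circle1, ∃ b, b + b = a := fun a =>
      ⟨DivisibleBy.div a (2 : ℤ), by rw [← two_zsmul, DivisibleBy.div_cancel a two_ne_zero]⟩
    obtain ⟨β, hβτ, hβσ⟩ := Gn.exists_antisymm_apply_eq_add hhalf hτinv hτrev hcτ hcycle
    exact ⟨(β, τ), (Gn.mul_self_eq_one_iff _).2 ⟨hτinv, hβτ⟩, rfl,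
      (Gn.mul_mul_inv_eq_inv_iff _ _).2 ⟨hτrev, hβσ⟩⟩

/-- **Theorem 1 (strong reversibility in `G_n`).**  Given `f = (α_f, σ_f) ∈ G_n` and an
involution `τ ∈ Sₙ` with `τ σ_f τ⁻¹ = σ_f⁻¹`, there is an involution `T ∈ G_n` with
permutation part `τ` reversing `f` iff for every `i`,
`∑_{j ∈ S_i} α_j(f) + ∑_{j ∈ τ(S_i)} α_j(f) = 0`, where `S_i` is the `σ_f`-cycle of `i`. -/
theorem stmt0 {n : ℕ} (hn : 1 ≤ n) (f : Gn n) (τ : Equiv.Perm (Fin n))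
    (hτinv : τ * τ = 1) (hτrev : τ * f.2 * τ⁻¹ = f.2⁻¹) :
    (∃ T : Gn n, T * T = 1 ∧ T.2 = τ ∧ T * f * T⁻¹ = f⁻¹) ↔
      ∀ i : Fin n,
        (∑ j ∈ Gn.cycleFinset f.2 i, f.1 j) +
          ∑ j ∈ (Gn.cycleFinset f.2 i).image τ, f.1 j = 0 :=
  stmt0_general f τ hτinv hτrev
end

section
/- Let f = (α_f, σ) ∈ G_n and let T = (α_T, τ) ∈ G_n be an involution with T f T⁻¹ = f⁻¹. Then for every j ∈ {1,…,n}: if τ(j) = j then 2·α_j(T) = 0 in 𝕋, and if τ(j) = σ(j) then 2·α_j(T) = 2·α_j(f) in 𝕋. -/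
namespace Gn
variable {n : ℕ}

lemma fst_add_fst_snd_eq_zero_of_mul_self_eq_one {T : Gn n} (hT : T * T = 1) (j : Fin n) :
    T.1 j + T.1 (T.2 j) = 0 :=
  congrFun (congrArg Prod.fst hT) j

lemma fst_add_fst_snd_of_conj_eq_inv {f T : Gn n} (hrev : T * f * T⁻¹ = f⁻¹) (j : Fin n) :
    f.1 j + T.1 (f.2 j) = T.1 j - f.1 (f.2⁻¹ (T.2 j)) := by
  have hcomm := congrFun (congrArg Prod.fst (mul_inv_eq_iff_eq_mul.mp hrev)) j
  simpa only [mul_fst, inv_fst, ← sub_eq_add_neg] using hcomm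

end Gn

/-- If `T = (α_T, τ)` is an involution of `G_n` reversing `f = (α_f, σ)`, then for every `j`:
if `τ(j) = j` then `2 α_j(T) = 0`, and if `τ(j) = σ(j)` then `2 α_j(T) = 2 α_j(f)`. -/
theorem stmt2 {n : ℕ} (f T : Gn n) (hT : T * T = 1) (hrev : T * f * T⁻¹ = f⁻¹) :
    ∀ j : Fin n,
      (T.2 j = j → 2 • T.1 j = 0) ∧
      (T.2 j = f.2 j → 2 • T.1 j = 2 • f.1 j) := by
  intro j
  have hinv := Gn.fst_add_fst_snd_eq_zero_of_mul_self_eq_one hT j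
  refine ⟨fun hfix => ?_, fun hσ => ?_⟩
  · rwa [hfix, ← two_smul ℕ] at hinv
  · have hrev_j := Gn.fst_add_fst_snd_of_conj_eq_inv hrev j
    rw [hσ, Equiv.Perm.inv_def, Equiv.symm_apply_apply] at hrev_j
    rw [hσ] at hinv
    rw [two_smul, two_smul, ← sub_eq_zero]
    linear_combination (norm := abel) hinv - hrev_j
end

section
/- Let f = (α_f, σ) ∈ G_n and let T = (α_T, τ) ∈ G_n be an involution with T f T⁻¹ = f⁻¹. Then for every j ∈ {1,…,n} and every natural number k, α_{σ^k(j)}(T) = α_j(T) − ∑_{p=0}^{k−1} α_{σ^p(j)}(f) − ∑_{p=1}^{k} α_{τ(σ^p(j))}(f) in 𝕋. -/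
/-- If `T = (α_T, τ)` is an involution of `G_n` reversing `f = (α_f, σ)`, then for every `j`
and every natural number `k`,
`α_{σ^k(j)}(T) = α_j(T) − ∑_{p=0}^{k−1} α_{σ^p(j)}(f) − ∑_{p=1}^{k} α_{τ(σ^p(j))}(f)`. -/
theorem stmt3 {n : ℕ} (f T : Gn n) (hT : T * T = 1) (hrev : T * f * T⁻¹ = f⁻¹) :
    ∀ (j : Fin n) (k : ℕ),
      T.1 ((f.2 ^ k) j) =
        T.1 j - (∑ p ∈ Finset.range k, f.1 ((f.2 ^ p) j))
          - ∑ p ∈ Finset.Icc 1 k, f.1 (T.2 ((f.2 ^ p) j)) := by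
  have hTf : T * f = f⁻¹ * T := by
    rw [← hrev]; group
  have hperm : ∀ j : Fin n, T.2 (f.2 j) = f.2⁻¹ (T.2 j) := by
    intro j
    have := congrArg Prod.snd hTf
    simp only [Gn.mul_snd] at this
    exact congrArg (fun p : Equiv.Perm (Fin n) => p j) this
  have hfst : ∀ j : Fin n, T.1 (f.2 j) = T.1 j - f.1 j - f.1 (T.2 (f.2 j)) := by
    intro j
    have := congrArg (fun g : Gn n => g.1 j) hTf
    simp only [Gn.mul_fst, Gn.inv_fst] at this
    rw [← hperm j] at this
    calc T.1 (f.2 j) = (f.1 j + T.1 (f.2 j)) - f.1 j := by abel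
      _ = (T.1 j + -f.1 (T.2 (f.2 j))) - f.1 j := by rw [this]
      _ = T.1 j - f.1 j - f.1 (T.2 (f.2 j)) := by abel
  intro j k
  induction k with
  | zero => simp
  | succ k ih =>
    have hpt : (f.2 ^ (k + 1)) j = f.2 ((f.2 ^ k) j) := by
      rw [pow_succ']; rfl
    rw [hpt, hfst ((f.2 ^ k) j), ih, Finset.sum_range_succ,
      Finset.sum_Icc_succ_top (by omega : 1 ≤ k + 1), hpt]
    abel
end

section
/- Let τ ∈ Sₙ be an involution and let f = (α_f, σ) and T = (α_T, τ) be elements of G_n. Then T is an involution reversing f (T² = identity and T f T⁻¹ = f⁻¹) if and only if: τ σ τ⁻¹ = σ⁻¹; for every j ∈ {1,…,n}, α_{τ(j)}(T) = −α_j(T); and for every j ∈ {1,…,n}, α_{σ(j)}(T) = α_j(T) − α_j(f) − α_{τ(σ(j))}(f). -/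
/-- Let `τ` be an involution of `Sₙ`, `f = (α_f, σ) ∈ G_n` and `T = (α_T, τ)`.  Then `T` is an
involution reversing `f` iff `τ σ τ⁻¹ = σ⁻¹`, `α_{τ(j)}(T) = −α_j(T)` for all `j`, and
`α_{σ(j)}(T) = α_j(T) − α_j(f) − α_{τ(σ(j))}(f)` for all `j`. -/
theorem stmt4 {n : ℕ} (τ : Equiv.Perm (Fin n)) (hτ : τ * τ = 1)
    (f : Gn n) (αT : Fin n → Circle1) :
    ((⟨αT, τ⟩ : Gn n) * ⟨αT, τ⟩ = 1 ∧
        (⟨αT, τ⟩ : Gn n) * f * (⟨αT, τ⟩ : Gn n)⁻¹ = f⁻¹) ↔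
      (τ * f.2 * τ⁻¹ = f.2⁻¹ ∧
        (∀ j : Fin n, αT (τ j) = -αT j) ∧
        (∀ j : Fin n, αT (f.2 j) = αT j - f.1 j - f.1 (τ (f.2 j)))) := by
  have hτinv : τ⁻¹ = τ := inv_eq_of_mul_eq_one_left hτ
  set σ := f.2 with hσ
  constructor
  · rintro ⟨h1, h2⟩
    have h1' : ∀ j, αT j + αT (τ j) = 0 := fun j => congrFun (congrArg Prod.fst h1) j
    have h2s : τ * σ * τ⁻¹ = σ⁻¹ := congrArg Prod.snd h2
    have h2f : ∀ j : Fin n,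
        -αT (τ⁻¹ j) + (f.1 (τ⁻¹ j) + αT (σ (τ⁻¹ j))) = -f.1 (σ⁻¹ j) :=
      fun j => congrFun (congrArg Prod.fst h2) j
    refine ⟨h2s, fun j => eq_neg_of_add_eq_zero_right (h1' j), fun j => ?_⟩
    have key := h2f (τ j)
    rw [hτinv] at key
    have hjj : τ (τ j) = j := by
      have := congrFun (congrArg (fun p : Equiv.Perm (Fin n) => (p : Fin n → Fin n)) hτ) j
      simpa using this
    rw [hjj] at key
    have hperm : σ⁻¹ (τ j) = τ (σ j) := by
      rw [← h2s]; simp [hτinv, hjj]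
    rw [hperm] at key
    calc αT (σ j) = αT j + (-αT j + (f.1 j + αT (σ j))) - f.1 j := by abel
      _ = αT j + (-f.1 (τ (σ j))) - f.1 j := by rw [key]
      _ = αT j - f.1 j - f.1 (τ (σ j)) := by abel
  · rintro ⟨hs, h1, h2⟩
    constructor
    · refine Prod.ext (funext fun j => ?_) hτ
      show αT j + αT (τ j) = 0
      rw [h1 j]; abel
    · refine Prod.ext (funext fun j => ?_) (by simpa using hs)
      show -αT (τ⁻¹ j) + (f.1 (τ⁻¹ j) + αT (σ (τ⁻¹ j))) = -f.1 (σ⁻¹ j)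
      rw [hτinv]
      have hperm : σ⁻¹ j = τ (σ (τ j)) := by
        rw [← hs]; simp [hτinv]
      rw [hperm, h2 (τ j)]
      abel
end

section
/- Let f = (α_f, σ_f) ∈ G_n be strongly reversible in G_n and suppose σ_f is an n-cycle (its cycle through some element is all of {1,…,n}). Then f^{2n} = identity; in particular f has finite order. -/
namespace Equiv.Perm

theorem pow_card_eq_one_of_forall_sameCycle {α : Type*} [Fintype α] [DecidableEq α]
    {σ : Perm α} {i : α} (h : ∀ j, σ.SameCycle i j) : σ ^ Fintype.card α = 1 := by
  by_cases hi : σ i = i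
  · have hσ : σ = 1 := by
      ext j
      obtain ⟨k, rfl⟩ := h j
      simp [zpow_apply_eq_self_of_apply_eq_self hi, hi]
    rw [hσ, one_pow]
  · have hfix : ∀ j, σ j ≠ j := fun j => (h j).apply_eq_self_iff.not.mp hi
    have hcyc : σ.IsCycle := (isCycle_iff_sameCycle hi).mpr fun {y} => iff_of_true (h y) (hfix y)
    have hsupp : σ.support = Finset.univ := by
      ext j
      simp [hfix j]
    rw [← Finset.card_univ, ← hsupp, ← hcyc.orderOf, pow_orderOf_eq_one]

end Equiv.Perm

namespace Gn

variable {n : ℕ}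

def sndHom : Gn n →* Equiv.Perm (Fin n) where
  toFun := Prod.snd
  map_one' := rfl
  map_mul' _ _ := rfl

lemma pow_snd (f : Gn n) (m : ℕ) : (f ^ m).2 = f.2 ^ m := map_pow sndHom f m

lemma zpow_snd (f : Gn n) (k : ℤ) : (f ^ k).2 = f.2 ^ k := map_zpow sndHom f k

lemma fst_apply_snd_of_commute {f g : Gn n} (hfg : Commute f g) (hg : g.2 = 1) (j : Fin n) :
    g.1 (f.2 j) = g.1 j := by
  have := congrArg (fun h : Gn n => h.1 j) hfg.eq
  simp only [mul_fst, hg, Equiv.Perm.one_apply] at this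
  exact add_left_cancel (this.symm.trans (add_comm _ _))

lemma fst_eq_of_commute_of_sameCycle {f g : Gn n} (hfg : Commute f g) (hg : g.2 = 1)
    {i j : Fin n} (hij : f.2.SameCycle i j) : g.1 j = g.1 i := by
  obtain ⟨k, rfl⟩ := hij
  rw [← zpow_snd]
  exact fst_apply_snd_of_commute (hfg.zpow_left k) hg i

lemma mem_center_of_snd_eq_one {g : Gn n} {c : Circle1} (hg : g.2 = 1) (hc : ∀ j, g.1 j = c) :
    g ∈ Subgroup.center (Gn n) :=
  Subgroup.mem_center_iff.mpr fun h =>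
    Prod.ext (funext fun j => by simp [hg, hc, add_comm]) (by simp [hg])

end Gn

/-- A strongly reversible element of `G_n` whose permutation part is an `n`-cycle satisfies
`f^(2n) = 1`; in particular it has finite order. -/
theorem stmt6 {n : ℕ} (f : Gn n)
    (hcycle : ∃ i : Fin n, ∀ j : Fin n, ∃ k : ℤ, (f.2 ^ k) i = j)
    (hsr : ∃ T : Gn n, T * T = 1 ∧ T * f * T⁻¹ = f⁻¹) :
    f ^ (2 * n) = 1 := by
  obtain ⟨i, hi⟩ := hcycle
  obtain ⟨T, -, hT⟩ := hsr
  have hsnd : (f ^ n).2 = 1 := by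
    simpa [Gn.pow_snd] using Equiv.Perm.pow_card_eq_one_of_forall_sameCycle hi
  have hcentral : f ^ n ∈ Subgroup.center (Gn n) :=
    Gn.mem_center_of_snd_eq_one hsnd fun j =>
      Gn.fst_eq_of_commute_of_sameCycle (Commute.self_pow f n) hsnd (hi j)
  have hrev : T * f ^ n * T⁻¹ = (f ^ n)⁻¹ := by rw [← conj_pow, hT, inv_pow]
  rw [Subgroup.mem_center_iff.mp hcentral T, mul_inv_cancel_right] at hrev
  rw [pow_mul', sq]
  exact mul_eq_one_iff_eq_inv.mpr hrev
end

section
/- For every n ≥ 1 and every integer q ≥ 3, the element f = (α, identity) ∈ G_n with α_1 = 1/q + ℤ and α_j = 0 for j ≠ 1 has finite order but is not strongly reversible in G_n. In particular, there exist finite order elements of G_n that are not strongly reversible in G_n. -/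
lemma coe_ne_zero_of (x : ℝ) (h0 : 0 < x) (h1 : x < 1) : (x : Circle1) ≠ 0 := by
  intro h
  rw [AddCircle.coe_eq_zero_iff] at h
  obtain ⟨k, hk⟩ := h
  have hk' : (k : ℝ) = x := by simpa using hk
  have h2 : (0:ℤ) < k := by exact_mod_cast hk' ▸ h0
  have h3 : k < 1 := by exact_mod_cast hk' ▸ h1
  omega

lemma pow_of_snd_one {n : ℕ} (f : Gn n) (hf : f.2 = 1) (m : ℕ) :
    f ^ m = (fun j => (m : ℤ) • f.1 j, 1) := by
  induction m with
  | zero => simp; rfl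
  | succ m ih =>
      have : f ^ (m + 1) = f ^ m * f := pow_succ f m
      rw [this, ih]
      refine Prod.ext (funext fun j => ?_) ?_
      · show f.1 j + ((m:ℤ) • f.1 (f.2 j)) = ((m:ℤ)+1) • f.1 j
        rw [hf]
        show f.1 j + (m:ℤ) • f.1 j = _
        rw [add_smul, one_smul, add_comm]
      · show 1 * f.2 = 1
        rw [hf, one_mul]

/-- For `n ≥ 1` and an integer `q ≥ 3`, the element `f = (α, id) ∈ G_n` with `α_1 = 1/q + ℤ`
and all other coordinates `0` has finite order but is not strongly reversible in `G_n`.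
In particular there exist finite order elements of `G_n` that are not strongly reversible. -/
theorem stmt7 {n : ℕ} (hn : 0 < n) (q : ℤ) (hq : 3 ≤ q) :
    ∀ f : Gn n,
      f = (⟨fun j => if j = (⟨0, hn⟩ : Fin n) then ((1 / (q : ℝ) : ℝ) : Circle1) else 0, 1⟩ : Gn n) →
      (∃ m : ℕ, 0 < m ∧ f ^ m = 1) ∧
        ¬ ∃ T : Gn n, T * T = 1 ∧ T * f * T⁻¹ = f⁻¹ := by
  intro f hf
  have hqR : (3:ℝ) ≤ (q:ℝ) := by exact_mod_cast hq
  have hq0 : (0:ℝ) < (q:ℝ) := by linarith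
  set z : Fin n := ⟨0, hn⟩ with hz
  have hfsnd : f.2 = 1 := by rw [hf]
  have hfz : f.1 z = ((1 / (q : ℝ) : ℝ) : Circle1) := by rw [hf]; simp
  have hfnz : ∀ j : Fin n, j ≠ z → f.1 j = 0 := by
    intro j hj; rw [hf]; simp [hj]
  constructor
  · refine ⟨q.toNat, by omega, ?_⟩
    rw [pow_of_snd_one f hfsnd]
    refine Prod.ext (funext fun j => ?_) rfl
    show ((q.toNat : ℤ) : ℤ) • f.1 j = 0
    by_cases hj : j = z
    · subst hj
      rw [hfz]
      have hqt : ((q.toNat : ℤ) : ℝ) = (q : ℝ) := by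
        have : (q.toNat : ℤ) = q := Int.toNat_of_nonneg (by omega)
        exact_mod_cast this
      rw [← AddCircle.coe_zsmul]
      have : (q.toNat : ℤ) • (1 / (q:ℝ)) = 1 := by
        rw [zsmul_eq_mul, hqt]
        field_simp
      rw [this]
      rw [AddCircle.coe_eq_zero_iff]
      exact ⟨1, by simp⟩
    · rw [hfnz j hj, smul_zero]
  · rintro ⟨T, -, hrev⟩
    have key := congrArg (fun h => h.1 z) hrev
    simp only [Gn.mul_fst, Gn.inv_fst, Gn.mul_snd, Gn.inv_snd, hfsnd] at key
    -- key : T⁻¹ stuff = -f.1 (...)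
    have key' : f.1 (T.2⁻¹ z) = - f.1 z := by
      simp only [inv_one, Equiv.Perm.coe_one, id_eq] at key
      have hre : -T.1 (T.2⁻¹ z) + (f.1 (T.2⁻¹ z) + T.1 (T.2⁻¹ z)) = f.1 (T.2⁻¹ z) := by
        rw [add_comm (f.1 (T.2⁻¹ z)), neg_add_cancel_left]
      rw [← hre]
      exact key
    have hc : ((1 / (q : ℝ) : ℝ) : Circle1) ≠ 0 :=
      coe_ne_zero_of _ (by positivity) (by rw [div_lt_one hq0]; linarith)
    by_cases hcase : T.2⁻¹ z = z
    · rw [hcase, hfz] at key'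
      rw [eq_neg_iff_add_eq_zero] at key'
      have h2c : ((2 / (q : ℝ) : ℝ) : Circle1) = 0 := by
        have hsum : (2 / (q:ℝ)) = 1/(q:ℝ) + 1/(q:ℝ) := by ring
        rw [hsum, AddCircle.coe_add]
        exact key'
      exact coe_ne_zero_of _ (by positivity) (by rw [div_lt_one hq0]; linarith) h2c
    · rw [hfnz _ hcase, hfz] at key'
      exact hc (by rw [← neg_neg (((1 / (q : ℝ) : ℝ) : Circle1)), ← key', neg_zero])
end

section
/- For every irrational real number a, the element f = ((a + ℤ, −a + ℤ), identity) of G_2 is strongly reversible in G_2 and has infinite order. In particular, there exist strongly reversible elements of G_2 that are not of finite order. -/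
lemma pow_fst_aux (α : Fin 2 → Circle1) (m : ℕ) :
    ((⟨α, 1⟩ : Gn 2) ^ m) = (⟨fun j => m • α j, 1⟩ : Gn 2) := by
  induction m with
  | zero => simp [zero_nsmul]; rfl
  | succ m ih =>
    rw [pow_succ, ih]
    refine Prod.ext (funext fun j => ?_) (by simp)
    show α j + m • α j = (m + 1) • α j
    rw [succ_nsmul, add_comm]

set_option maxRecDepth 10000

/-- For every irrational real `a`, the element `f = ((a + ℤ, −a + ℤ), id)` of `G_2` is strongly
reversible in `G_2` and has infinite order.  In particular there exist strongly reversible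
elements of `G_2` that are not of finite order. -/
theorem stmt8 (a : ℝ) (ha : Irrational a) :
    ∀ f : Gn 2, f = (⟨![(a : Circle1), ((-a : ℝ) : Circle1)], 1⟩ : Gn 2) →
      (∃ T : Gn 2, T * T = 1 ∧ T * f * T⁻¹ = f⁻¹) ∧
        (∀ m : ℕ, 0 < m → f ^ m ≠ 1) := by
  intro f hf
  subst hf
  constructor
  · refine ⟨⟨fun _ => 0, Equiv.swap 0 1⟩, ?_, ?_⟩
    · refine Prod.ext (funext fun j => by simp) ?_
      simp [Equiv.swap_mul_self]
    · refine Prod.ext (funext fun j => ?_) ?_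
      · fin_cases j <;>
        · simp only [Gn.mul_fst, Gn.inv_fst, Gn.inv_snd, Gn.mul_snd, Gn.one_snd]
          simp [Equiv.swap_apply_left, Equiv.swap_apply_right]
      · simp [Equiv.swap_mul_self]
  · intro m hm hcon
    rw [pow_fst_aux] at hcon
    have h0 : (m • ((a : ℝ) : Circle1)) = 0 := by
      have := congrArg (fun g : Gn 2 => g.1 0) hcon
      simpa using this
    rw [← AddCircle.coe_nsmul, AddCircle.coe_eq_zero_iff] at h0
    obtain ⟨n, hn⟩ := h0
    apply ha
    refine ⟨(n : ℚ) / m, ?_⟩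
    have hm' : (m : ℝ) ≠ 0 := by positivity
    push_cast
    field_simp
    simp only [zsmul_eq_mul, mul_one, nsmul_eq_mul] at hn
    linarith [hn]
end

section
/- The subgroup of G_n generated by the set of all involutions of G_n equals the kernel of the group homomorphism A : G_n → 𝕋 defined by A(α, σ) = 2·(α_1 + ⋯ + α_n). -/
namespace Gn
variable {n : ℕ}

/-- The homomorphism `A : G_n → 𝕋`, `A(α, σ) = 2(α_1 + ⋯ + α_n)` (written multiplicatively). -/
noncomputable def A (n : ℕ) : Gn n →* Multiplicative Circle1 where
  toFun f := Multiplicative.ofAdd (2 • ∑ j, f.1 j)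
  map_one' := by simp
  map_mul' f g := by
    have h1 : ∑ j, (f * g).1 j = (∑ j, g.1 j) + ∑ j, f.1 (g.2 j) := by
      simp [Finset.sum_add_distrib]
    show Multiplicative.ofAdd (2 • ∑ j, (f * g).1 j) =
      Multiplicative.ofAdd (2 • ∑ j, f.1 j) * Multiplicative.ofAdd (2 • ∑ j, g.1 j)
    rw [← ofAdd_add, h1, Equiv.sum_comp g.2 f.1, smul_add, add_comm]

end Gn

/-!
An involution `(α, σ)` satisfies `α + α ∘ σ = 0`; summing over the coordinates gives
`2 ∑ α = 0`, so involutions lie in the kernel of `A`. Conversely `(α, σ) = (0, σ) · (α, 1)`.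
The factor `(0, σ)` is a product of transpositions, which are involutions. If `2 ∑ α = 0`, the
translation by `α` splits as `∑ⱼ (αⱼ eⱼ - αⱼ e₀) + s e₀` with `s = ∑ α` and `2 s = 0`: the last
term is an involution, and `t eᵢ - t eⱼ = u - u ∘ (i j)` for `u = t eᵢ` is the product of the
involutions `(0, (i j))` and `(t eᵢ - t eⱼ, (i j))`.
-/

theorem AddSubgroup.mem_of_two_nsmul_sum_eq_zero {ι M : Type*} [Fintype ι] [DecidableEq ι]
    [AddCommGroup M] {S : AddSubgroup (ι → M)}
    (single_sub_mem : ∀ i j (t : M), Pi.single i t - Pi.single j t ∈ S)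
    (single_mem : ∀ i (t : M), 2 • t = 0 → Pi.single i t ∈ S)
    {v : ι → M} (hv : 2 • ∑ i, v i = 0) : v ∈ S := by
  cases isEmpty_or_nonempty ι
  · exact Subsingleton.elim 0 v ▸ S.zero_mem
  obtain ⟨i₀⟩ := ‹Nonempty ι›
  have decomp :
      v = ∑ i, (Pi.single i (v i) - Pi.single i₀ (v i)) + Pi.single i₀ (∑ i, v i) := by
    have sum_single : (∑ i, Pi.single i₀ (v i) : ι → M) = Pi.single i₀ (∑ i, v i) :=
      (map_sum (AddMonoidHom.single (fun _ : ι => M) i₀) v Finset.univ).symm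
    rw [Finset.sum_sub_distrib, Finset.univ_sum_single, sum_single]
    exact (sub_add_cancel v _).symm
  rw [decomp]
  exact add_mem (sum_mem fun i _ => single_sub_mem i i₀ (v i)) (single_mem i₀ _ hv)

namespace Gn
variable {n : ℕ}

theorem mem_ker_A_iff (f : Gn n) : f ∈ (A n).ker ↔ 2 • ∑ j, f.1 j = 0 :=
  MonoidHom.mem_ker.trans ofAdd_eq_one

theorem sum_fst_mul (f g : Gn n) : ∑ j, (f * g).1 j = ∑ j, f.1 j + ∑ j, g.1 j := by
  simp only [mul_fst, Finset.sum_add_distrib, Equiv.sum_comp g.2 f.1, add_comm]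

theorem two_nsmul_sum_fst_eq_zero_of_mul_self_eq_one {T : Gn n} (hT : T * T = 1) :
    2 • ∑ j, T.1 j = 0 := by
  calc 2 • ∑ j, T.1 j = ∑ j, (T * T).1 j := by rw [sum_fst_mul, two_nsmul]
    _ = 0 := by simp only [hT, one_fst, Finset.sum_const_zero]

theorem closure_involutions_le_ker_A : Subgroup.closure {T : Gn n | T * T = 1} ≤ (A n).ker :=
  (Subgroup.closure_le _).2 fun _ hT =>
    (mem_ker_A_iff _).2 (two_nsmul_sum_fst_eq_zero_of_mul_self_eq_one hT)

noncomputable def ofPerm : Equiv.Perm (Fin n) →* Gn n where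
  toFun σ := (0, σ)
  map_one' := rfl
  map_mul' _ _ := Prod.ext (funext fun _ => (add_zero 0).symm) rfl

noncomputable def ofTranslation : Multiplicative (Fin n → Circle1) →* Gn n where
  toFun v := (v.toAdd, 1)
  map_one' := rfl
  map_mul' _ _ := Prod.ext (funext fun _ => add_comm _ _) rfl

theorem ofPerm_mul_ofTranslation (f : Gn n) : ofPerm f.2 * ofTranslation (.ofAdd f.1) = f :=
  Prod.ext (funext fun _ => add_zero _) (mul_one _)

theorem ofPerm_mem_closure_involutions (σ : Equiv.Perm (Fin n)) :
    ofPerm σ ∈ Subgroup.closure {T : Gn n | T * T = 1} := by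
  have swaps_le : Subgroup.closure {τ : Equiv.Perm (Fin n) | τ.IsSwap} ≤
      (Subgroup.closure {T : Gn n | T * T = 1}).comap ofPerm :=
    (Subgroup.closure_le _).2 fun τ ⟨a, b, _, hτ⟩ => Subgroup.subset_closure <| by
      rw [Set.mem_ofPred_eq, ← map_mul, hτ, Equiv.swap_mul_self, map_one]
  exact swaps_le (by rw [Equiv.Perm.closure_isSwap]; exact Subgroup.mem_top σ)

theorem mk_mul_self_eq_one {w : Fin n → Circle1} {σ : Equiv.Perm (Fin n)} (hσ : σ * σ = 1)
    (hw : ∀ k, w (σ k) = -w k) : ((w, σ) : Gn n) * (w, σ) = 1 :=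
  Prod.ext (funext fun k => by simp [hw]) hσ

theorem ofTranslation_sub_comp_mem_closure_involutions (u : Fin n → Circle1)
    {σ : Equiv.Perm (Fin n)} (hσ : σ * σ = 1) :
    ofTranslation (.ofAdd (u - u ∘ σ)) ∈ Subgroup.closure {T : Gn n | T * T = 1} := by
  have negated : ∀ k, (u - u ∘ σ) (σ k) = -(u - u ∘ σ) k := fun k => by
    simp [← Equiv.Perm.mul_apply, hσ]
  have factor : ofTranslation (.ofAdd (u - u ∘ σ)) = ofPerm σ * ((u - u ∘ σ, σ) : Gn n) :=
    Prod.ext (funext fun _ => (add_zero _).symm) hσ.symm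
  rw [factor]
  exact mul_mem (ofPerm_mem_closure_involutions σ)
    (Subgroup.subset_closure (mk_mul_self_eq_one hσ negated))

theorem ofTranslation_mem_closure_involutions {v : Fin n → Circle1} (hv : 2 • ∑ j, v j = 0) :
    ofTranslation (.ofAdd v) ∈ Subgroup.closure {T : Gn n | T * T = 1} := by
  refine (Subgroup.mem_toAddSubgroup'
    ((Subgroup.closure {T : Gn n | T * T = 1}).comap ofTranslation) v).1
    (AddSubgroup.mem_of_two_nsmul_sum_eq_zero (fun i j t => ?_) (fun i t ht => ?_) hv)
  all_goals refine (Subgroup.mem_toAddSubgroup' _ _).2 (Subgroup.mem_comap.2 ?_)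
  · have single_comp_swap : Pi.single i t ∘ Equiv.swap i j = Pi.single j t := by
      rw [Pi.single_comp_equiv, Equiv.symm_swap, Equiv.swap_apply_left]
    simpa only [single_comp_swap] using
      ofTranslation_sub_comp_mem_closure_involutions (Pi.single i t) (Equiv.swap_mul_self i j)
  · refine Subgroup.subset_closure ?_
    change ofTranslation (.ofAdd (Pi.single i t)) * ofTranslation (.ofAdd (Pi.single i t)) = 1
    rw [← map_mul, ← ofAdd_add, ← Pi.single_add, ← two_nsmul, ht,
      Pi.single_zero, ofAdd_zero, map_one]

end Gn

/-- The subgroup of `G_n` generated by its involutions is exactly the kernel of the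
homomorphism `A : G_n → 𝕋`, `A(α, σ) = 2(α_1 + ⋯ + α_n)`. -/
theorem stmt9 {n : ℕ} :
    Subgroup.closure {T : Gn n | T * T = 1} = (Gn.A n).ker := by
  refine le_antisymm Gn.closure_involutions_le_ker_A fun f hf => ?_
  rw [← Gn.ofPerm_mul_ofTranslation f]
  exact mul_mem (Gn.ofPerm_mem_closure_involutions _)
    (Gn.ofTranslation_mem_closure_involutions ((Gn.mem_ker_A_iff f).1 hf))
end

section
/- Let σ and τ be permutations of a finite set X with τ² = identity and τ σ τ⁻¹ = σ⁻¹. Let i ∈ X, let S = {σ^k(i) : k ∈ ℤ} be the σ-cycle of i and let p be the cardinality of S. Then the image τ(S) is again a σ-cycle of cardinality p, and exactly one of the following holds: either τ(i) ∈ S, in which case there exists u ∈ S with τ(u) = u or τ(u) = σ(u); or τ(i) ∉ S, in which case τ(S) is disjoint from S. -/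
/-- The `σ`-cycle of `i`: the set `{σ^k i : k ∈ ℤ}`. -/
def cycleSet {X : Type*} (σ : Equiv.Perm X) (i : X) : Set X :=
  {j | ∃ k : ℤ, (σ ^ k) i = j}

/-- **Lemma (structure of cycles under a reversing involution).**  Let `σ, τ` be permutations of
a finite set `X` with `τ² = 1` and `τ σ τ⁻¹ = σ⁻¹`, let `S` be the `σ`-cycle of `i` and `p` its
cardinality.  Then `τ(S)` is again a `σ`-cycle of cardinality `p`, and exactly one of the
following holds: either `τ(i) ∈ S`, and then some `u ∈ S` satisfies `τ(u) = u` or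
`τ(u) = σ(u)`; or `τ(i) ∉ S`, and then `τ(S)` is disjoint from `S`. -/
theorem stmt14 {X : Type*} [Fintype X] (σ τ : Equiv.Perm X)
    (hτ : τ * τ = 1) (hrev : τ * σ * τ⁻¹ = σ⁻¹) (i : X) :
    ((∃ i' : X, τ '' cycleSet σ i = cycleSet σ i') ∧
      (τ '' cycleSet σ i).ncard = (cycleSet σ i).ncard) ∧
    ((τ i ∈ cycleSet σ i ∧ ∃ u ∈ cycleSet σ i, τ u = u ∨ τ u = σ u) ∨
      (τ i ∉ cycleSet σ i ∧ Disjoint (τ '' cycleSet σ i) (cycleSet σ i))) := by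
  have hsc : SemiconjBy τ σ σ⁻¹ := by
    unfold SemiconjBy
    have := congrArg (fun f => f * τ) hrev
    simpa [mul_assoc] using this
  have hmul : ∀ k : ℤ, τ * σ ^ k = σ ^ (-k) * τ := by
    intro k
    have := (hsc.zpow_right k).eq
    rw [inv_zpow, ← zpow_neg] at this
    exact this
  have key : ∀ (k : ℤ) (x : X), τ ((σ ^ k) x) = (σ ^ (-k)) (τ x) := by
    intro k x
    have := congrFun (congrArg (fun f : Equiv.Perm X => (f : X → X)) (hmul k)) x
    simpa using this
  constructor
  · constructor
    · refine ⟨τ i, ?_⟩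
      ext y
      simp only [Set.mem_image, cycleSet, Set.mem_setOf_eq]
      constructor
      · rintro ⟨x, ⟨k, rfl⟩, rfl⟩
        exact ⟨-k, (key k i).symm⟩
      · rintro ⟨k, rfl⟩
        exact ⟨(σ ^ (-k)) i, ⟨-k, rfl⟩, by rw [key (-k) i, neg_neg]⟩
    · exact Set.ncard_image_of_injective _ τ.injective
  · by_cases h : τ i ∈ cycleSet σ i
    · left
      refine ⟨h, ?_⟩
      obtain ⟨m, hm⟩ := h
      rcases Int.even_or_odd m with ⟨k, hk⟩ | ⟨k, hk⟩
      · refine ⟨(σ ^ k) i, ⟨k, rfl⟩, Or.inl ?_⟩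
        rw [key k i, ← hm, ← Equiv.Perm.mul_apply, ← zpow_add,
          show -k + m = k by omega]
      · refine ⟨(σ ^ k) i, ⟨k, rfl⟩, Or.inr ?_⟩
        have h2 : σ ((σ ^ k) i) = (σ ^ (1 + k)) i := by
          rw [zpow_one_add]; rfl
        rw [key k i, ← hm, ← Equiv.Perm.mul_apply, ← zpow_add, h2,
          show -k + m = 1 + k by omega]
    · right
      refine ⟨h, ?_⟩
      rw [Set.disjoint_left]
      rintro y ⟨x, ⟨k, rfl⟩, rfl⟩ ⟨l, hl⟩
      apply h
      rw [key k i] at hl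
      have h3 : (σ ^ k) ((σ ^ l) i) = (σ ^ k) ((σ ^ (-k)) (τ i)) := congrArg _ hl
      rw [← Equiv.Perm.mul_apply, ← Equiv.Perm.mul_apply, ← zpow_add, ← zpow_add,
        add_neg_cancel, zpow_zero, Equiv.Perm.one_apply] at h3
      exact ⟨k + l, h3⟩
end

section
/- Let σ and ρ be permutations of a finite set X with ρ σ ρ⁻¹ = σ⁻¹, and let i ∈ X. Suppose there is no odd integer s such that ρ^s(i) belongs to the ⟨σ⟩-orbit of i (the set {σ^t(i) : t ∈ ℤ}). Then the parity of s in the expression ρ^s σ^t(i) is well defined: for all integers s, t, s', t', if ρ^s(σ^t(i)) = ρ^{s'}(σ^{t'}(i)) then s ≡ s' (mod 2). -/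
/-- Let `σ, ρ` be permutations of a finite set `X` with `ρ σ ρ⁻¹ = σ⁻¹` and let `i ∈ X`.
If no odd power `ρ^s` sends `i` into the `⟨σ⟩`-orbit of `i`, then the parity of `s` in the
expression `ρ^s σ^t (i)` is well defined: `ρ^s σ^t (i) = ρ^{s'} σ^{t'} (i)` forces
`s ≡ s' (mod 2)`. -/
theorem stmt15 {X : Type*} [Fintype X] (σ ρ : Equiv.Perm X)
    (hrev : ρ * σ * ρ⁻¹ = σ⁻¹) (i : X)
    (hodd : ¬ ∃ s : ℤ, Odd s ∧ ∃ t : ℤ, (σ ^ t) i = (ρ ^ s) i) :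
    ∀ s t s' t' : ℤ, (ρ ^ s) ((σ ^ t) i) = (ρ ^ s') ((σ ^ t') i) → s ≡ s' [ZMOD 2] := by
  intro s t s' t' h
  by_contra hc
  have hu : Odd (s - s') := by
    rcases Int.even_or_odd (s - s') with he | ho
    · exact absurd (((Int.modEq_iff_dvd).mpr he.two_dvd).symm) hc
    · exact ho
  -- basic commutation relations
  have h1 : ρ * σ = σ⁻¹ * ρ := by
    rw [mul_inv_eq_iff_eq_mul] at hrev; exact hrev
  have h2 : ρ * σ⁻¹ = σ * ρ := by
    have hrev' : ρ * σ⁻¹ * ρ⁻¹ = σ := by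
      have := congrArg Inv.inv hrev
      simpa [mul_assoc] using this
    rw [mul_inv_eq_iff_eq_mul] at hrev'; exact hrev'
  have hcomm : Commute (ρ ^ (2 : ℤ)) σ := by
    show ρ ^ (2 : ℤ) * σ = σ * ρ ^ (2 : ℤ)
    have : (2 : ℤ) = 1 + 1 := by norm_num
    rw [this, zpow_add, zpow_one]
    calc ρ * ρ * σ = ρ * (σ⁻¹ * ρ) := by rw [mul_assoc, h1]
    _ = (ρ * σ⁻¹) * ρ := by rw [mul_assoc]
    _ = σ * (ρ * ρ) := by rw [h2, mul_assoc]
  have hconj : ρ * σ ^ t * ρ⁻¹ = σ ^ (-t) := by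
    have : ρ * σ ^ t * ρ⁻¹ = (MulAut.conj ρ) (σ ^ t) := rfl
    rw [this, map_zpow, MulAut.conj_apply, hrev, inv_zpow, zpow_neg]
  obtain ⟨k, hk⟩ := hu
  have hc1 : Commute ((ρ ^ (2 : ℤ)) ^ k) (σ ^ (-t)) := (hcomm.zpow_right (-t)).zpow_left k
  have key : ρ ^ (s - s') * σ ^ t = σ ^ (-t) * ρ ^ (s - s') := by
    rw [hk, zpow_add, zpow_one, zpow_mul]
    calc (ρ ^ (2:ℤ)) ^ k * ρ * σ ^ t
        = (ρ ^ (2:ℤ)) ^ k * (ρ * σ ^ t * ρ⁻¹) * ρ := by group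
      _ = (ρ ^ (2:ℤ)) ^ k * σ ^ (-t) * ρ := by rw [hconj]
      _ = σ ^ (-t) * ((ρ ^ (2:ℤ)) ^ k * ρ) := by rw [hc1.eq, mul_assoc]
  have h0 : (ρ ^ (s - s')) ((σ ^ t) i) = (σ ^ t') i := by
    have hsplit : ρ ^ (s - s') = ρ ^ (-s') * ρ ^ s := by
      rw [← zpow_add]; ring_nf
    rw [hsplit, Equiv.Perm.mul_apply, h, ← Equiv.Perm.mul_apply, ← zpow_add]
    norm_num
  have h3 : (σ ^ (-t)) ((ρ ^ (s - s')) i) = (σ ^ t') i := by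
    rw [← Equiv.Perm.mul_apply, ← key, Equiv.Perm.mul_apply, h0]
  have h4 : (ρ ^ (s - s')) i = (σ ^ (t + t')) i := by
    have := congrArg (σ ^ t) h3
    simp only [← Equiv.Perm.mul_apply, ← zpow_add] at this
    simpa using this
  exact hodd ⟨s - s', ⟨k, hk⟩, t + t', h4.symm⟩
end

section
/- Let f = (α_f, σ_f) ∈ G_n and T = (α_T, σ_T) ∈ G_n with T f T⁻¹ = f⁻¹, and suppose there exist an odd integer s and an integer t such that σ_T^s = σ_f^t. Then: (1) σ_f² = identity; (2) f is strongly reversible in G_n (reversible by an involution of G_n); and (3) f⁴ = identity. -/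
/-!
Replacing `T` by `T ^ s` keeps it a reversor of `f` (an odd power of a reversor reverses), and
`T ^ s * f ^ (-t)` is then a reversor whose permutation part is trivial, i.e. a pure translation
`a`. A translation reversing `f` forces `σ_f = σ_f⁻¹`, and then, since `f²` is a translation too,
`f² = f⁻²`. Coordinatewise, `a` reversing `f` says `α_j + α_{σ j} = a_j - a_{σ j}`; on each
2-cycle of `σ_f` one can trade `a` for a translation by a 2-torsion vector with the same
property, and that translation is an involution reversing `f`.
-/

section Reversal

variable {G : Type*} [Group G] {g x : G}

theorem SemiconjBy.zpow_left_of_odd (h : SemiconjBy x g g⁻¹) {s : ℤ} (hs : Odd s) :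
    SemiconjBy (x ^ s) g g⁻¹ := by
  obtain ⟨k, rfl⟩ := hs
  have h' : SemiconjBy x g⁻¹ g := by simpa only [inv_inv] using h.inv_right
  have hsq : Commute (x * x) g := h'.mul_left h
  rw [zpow_add_one, zpow_mul, zpow_two]
  exact SemiconjBy.mul_left (hsq.zpow_left k).inv_right h

theorem SemiconjBy.mul_self_eq_one_of_commute (h : SemiconjBy x g g⁻¹) (hc : Commute x g) :
    g * g = 1 :=
  mul_eq_one_iff_eq_inv.mpr (mul_right_cancel (hc.eq.symm.trans h.eq))

end Reversal

theorem exists_add_self_eq_zero_of_eq_sub_comp {X M : Type*} [LinearOrder X] [AddCommGroup M]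
    {σ : X → X} (hσ : Function.Involutive σ) {β a : X → M} (hβ : ∀ j, β (σ j) = β j)
    (h : ∀ j, β j = a j - a (σ j)) :
    ∃ e : X → M, (∀ j, e j + e j = 0) ∧ ∀ j, β j = e j - e (σ j) := by
  have hβ_two (j : X) : β j + β j = 0 := by
    have : β j = -β j := by
      conv_lhs => rw [← hβ, h (σ j), hσ j]
      rw [h j, neg_sub]
    exact add_eq_zero_iff_eq_neg.mpr this
  -- on each 2-cycle `{j, σ j}`, all of `β j` is carried by the smaller point
  refine ⟨fun j => if j < σ j then β j else 0, fun j => ?_, fun j => ?_⟩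
  · dsimp only
    split_ifs
    · exact hβ_two j
    · exact add_zero 0
  · dsimp only
    rcases lt_trichotomy j (σ j) with hlt | heq | hgt
    · have : ¬ σ j < σ (σ j) := by rw [hσ j]; exact hlt.not_gt
      simp only [hlt, this, if_true, if_false, sub_zero]
    · have hfix : β j = 0 := by rw [h, ← heq, sub_self]
      simp only [← heq, lt_irrefl, if_false, sub_zero, hfix]
    · have : σ j < σ (σ j) := by rw [hσ j]; exact hgt
      simp only [hgt.not_gt, this, if_true, if_false, zero_sub, hβ]
      exact (neg_eq_of_add_eq_zero_left (hβ_two j)).symm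

namespace Gn

variable {n : ℕ}

noncomputable def toPerm : Gn n →* Equiv.Perm (Fin n) where
  toFun := Prod.snd
  map_one' := rfl
  map_mul' _ _ := rfl

@[simp] lemma toPerm_apply (f : Gn n) : toPerm f = f.2 := rfl

lemma commute_of_snd_eq_one {a b : Gn n} (ha : a.2 = 1) (hb : b.2 = 1) : Commute a b :=
  Prod.ext (funext fun j => by simp [ha, hb, add_comm]) (by simp [ha, hb])

lemma semiconjBy_inv_iff_of_snd_eq_one {a f : Gn n} (ha : a.2 = 1) (hσ : f.2 * f.2 = 1) :
    SemiconjBy a f f⁻¹ ↔ ∀ j, f.1 j + f.1 (f.2 j) = a.1 j - a.1 (f.2 j) := by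
  have hinv : f.2⁻¹ = f.2 := (eq_inv_of_mul_eq_one_left hσ).symm
  simp only [SemiconjBy, Prod.ext_iff, funext_iff, mul_fst, mul_snd, inv_fst, inv_snd, ha,
    hinv, Equiv.Perm.one_apply, mul_one, one_mul, and_true]
  refine forall_congr' fun j => ?_
  rw [← sub_eq_zero, iff_comm, ← sub_eq_zero]
  constructor <;> intro h <;> rw [← h] <;> abel

lemma exists_involution_semiconjBy_inv {a f : Gn n} (ha : a.2 = 1) (hσ : f.2 * f.2 = 1)
    (hrev : SemiconjBy a f f⁻¹) : ∃ b : Gn n, b * b = 1 ∧ SemiconjBy b f f⁻¹ := by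
  have hσ_inv : Function.Involutive f.2 := fun j => by
    rw [← Equiv.Perm.mul_apply, hσ, Equiv.Perm.one_apply]
  have hβ (j : Fin n) : f.1 (f.2 j) + f.1 (f.2 (f.2 j)) = f.1 j + f.1 (f.2 j) := by
    rw [hσ_inv j, add_comm]
  obtain ⟨e, he_two, he⟩ := exists_add_self_eq_zero_of_eq_sub_comp hσ_inv hβ
    ((semiconjBy_inv_iff_of_snd_eq_one ha hσ).mp hrev)
  refine ⟨(e, 1), Prod.ext (funext fun j => he_two j) (mul_one _), ?_⟩
  exact (semiconjBy_inv_iff_of_snd_eq_one rfl hσ).mpr he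

end Gn

/-- If `T` reverses `f` in `G_n` and some odd power of `σ_T` is a power of `σ_f`, then
`σ_f` is an involution, `f` is strongly reversible in `G_n`, and `f⁴ = 1`. -/
theorem stmt16 {n : ℕ} (f T : Gn n) (hrev : T * f * T⁻¹ = f⁻¹)
    (hpow : ∃ s t : ℤ, Odd s ∧ T.2 ^ s = f.2 ^ t) :
    f.2 * f.2 = 1 ∧
      (∃ T' : Gn n, T' * T' = 1 ∧ T' * f * T'⁻¹ = f⁻¹) ∧
      f ^ 4 = 1 := by
  obtain ⟨s, t, hs, hst⟩ := hpow
  set a := T ^ s * f ^ (-t)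
  have ha : a.2 = 1 := by
    rw [Gn.mul_snd, Gn.zpow_snd, Gn.zpow_snd, hst, ← zpow_add, add_neg_cancel, zpow_zero]
  have ha_rev : SemiconjBy a f f⁻¹ :=
    (SemiconjBy.zpow_left_of_odd (mul_inv_eq_iff_eq_mul.mp hrev) hs).mul_left
      ((Commute.refl f).zpow_left _)
  have hσ : f.2 * f.2 = 1 :=
    (ha_rev.map Gn.toPerm).mul_self_eq_one_of_commute
      (by simp only [Gn.toPerm_apply, ha]; exact Commute.one_left _)
  have hf4 : f ^ 2 * f ^ 2 = 1 := by
    refine SemiconjBy.mul_self_eq_one_of_commute (x := a) ?_ ?_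
    · simpa only [inv_pow] using ha_rev.pow_right 2
    · exact Gn.commute_of_snd_eq_one ha (by simpa only [pow_two, Gn.mul_snd] using hσ)
  obtain ⟨T', hT'_sq, hT'_rev⟩ := Gn.exists_involution_semiconjBy_inv ha hσ ha_rev
  exact ⟨hσ, ⟨T', hT'_sq, mul_inv_eq_iff_eq_mul.mpr hT'_rev⟩, by rw [← hf4, ← pow_add]⟩
end

section
/- Let K be the Baumslag–Solitar group BS(1,−1) = ⟨a, b | b a b⁻¹ = a⁻¹⟩, let H be a group and let ρ : K → H be a group homomorphism. Then ρ is not injective if and only if there exists a positive integer p such that either ρ(a)^p = 1 or ρ(b)^{2p} = 1. -/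
/-- The single relator `b a b⁻¹ a` of `BS(1,−1)`, over the free group on two generators
(`false` playing the role of `a`, `true` that of `b`). -/
def bsRels : Set (FreeGroup Bool) :=
  {FreeGroup.of true * FreeGroup.of false * (FreeGroup.of true)⁻¹ * FreeGroup.of false}

/-- The Baumslag–Solitar group `BS(1,−1) = ⟨a, b | b a b⁻¹ = a⁻¹⟩`. -/
abbrev BS1m1 : Type := PresentedGroup bsRels

/-- The generator `a` of `BS(1,−1)`. -/
def bsA : BS1m1 := PresentedGroup.of false

/-- The generator `b` of `BS(1,−1)`. -/
def bsB : BS1m1 := PresentedGroup.of true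


/-!
Since `b` conjugates `a` to its inverse, every element of `BS(1,−1)` has the form `a^m b^n`.
If `ρ` kills such an element with `(m, n) ≠ (0, 0)`, then either `m = 0` and `ρ(b)^n = 1`, or
`ρ(a)^m = ρ(b)^(-n)` commutes with `ρ(b)`, while `ρ(b)` conjugates it to `ρ(a)^(-m)`; hence
`ρ(a)^(2m) = 1`. Either way `ρ(a)` or `ρ(b)` has finite order, which is what the right-hand
side says. Conversely `a` and `b` have infinite order, as seen in the infinite dihedral
group and in `ℤ`, so an injective `ρ` keeps both images of infinite order.
-/

section InvertingConjugation

variable {G : Type*} [Group G] {x y : G}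

theorem SemiconjBy.mul_zpow_eq_zpow_neg_mul (h : SemiconjBy y x x⁻¹) (m : ℤ) :
    y * x ^ m = x ^ (-m) * y := by
  simpa only [inv_zpow', SemiconjBy] using h.zpow_right m

theorem SemiconjBy.inv_mul_zpow_eq_zpow_neg_mul (h : SemiconjBy y x x⁻¹) (m : ℤ) :
    y⁻¹ * x ^ m = x ^ (-m) * y⁻¹ := by
  simpa only [inv_zpow', neg_neg, SemiconjBy] using h.inv_symm_left.zpow_right (-m)

theorem SemiconjBy.isOfFinOrder_or_of_zpow_mul_zpow_eq_one (h : SemiconjBy y x x⁻¹) {m n : ℤ}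
    (hmn : x ^ m * y ^ n = 1) (hne : m ≠ 0 ∨ n ≠ 0) : IsOfFinOrder x ∨ IsOfFinOrder y := by
  rcases eq_or_ne m 0 with rfl | hm
  · rw [zpow_zero, one_mul] at hmn
    exact .inr (isOfFinOrder_iff_zpow_eq_one.2 ⟨n, hne.resolve_left (not_not_intro rfl), hmn⟩)
  · have hxy : x ^ m = y ^ (-n) := by rw [zpow_neg]; exact eq_inv_of_mul_eq_one_left hmn
    have hsymm : x ^ (-m) = x ^ m := mul_right_cancel (b := y) <| by
      rw [← h.mul_zpow_eq_zpow_neg_mul, hxy, (Commute.self_zpow y (-n)).eq]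
    by_contra hfin
    have := injective_zpow_iff_not_isOfFinOrder.2 (not_or.1 hfin).1 hsymm
    omega

end InvertingConjugation

theorem exists_pow_eq_one_or_pow_two_mul_eq_one_iff {M : Type*} [Monoid M] {x y : M} :
    (∃ p : ℕ, 0 < p ∧ (x ^ p = 1 ∨ y ^ (2 * p) = 1)) ↔ IsOfFinOrder x ∨ IsOfFinOrder y := by
  simp only [isOfFinOrder_iff_pow_eq_one]
  constructor
  · rintro ⟨p, hp, hx | hy⟩
    exacts [.inl ⟨p, hp, hx⟩, .inr ⟨2 * p, by omega, hy⟩]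
  · rintro (⟨p, hp, hx⟩ | ⟨p, hp, hy⟩)
    exacts [⟨p, hp, .inl hx⟩, ⟨p, hp, .inr (by rw [pow_mul', hy, one_pow])⟩]

theorem not_isOfFinOrder_of_map_eq {M N : Type*} [Monoid M] [Monoid N] (f : M →* N) {g : M}
    {x : N} (hg : f g = x) (hx : ¬IsOfFinOrder x) : ¬IsOfFinOrder g :=
  fun hfin => hx (hg ▸ f.isOfFinOrder hfin)

theorem bsB_semiconjBy_bsA : SemiconjBy bsB bsA bsA⁻¹ := by
  have hrel : PresentedGroup.mk bsRels
      (FreeGroup.of true * FreeGroup.of false * (FreeGroup.of true)⁻¹ * FreeGroup.of false) = 1 :=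
    (QuotientGroup.eq_one_iff _).2 (Subgroup.subset_normalClosure rfl)
  simp only [map_mul, map_inv] at hrel
  rw [SemiconjBy, ← mul_inv_eq_iff_eq_mul, eq_inv_iff_mul_eq_one]
  exact hrel

theorem exists_eq_bsA_zpow_mul_bsB_zpow (g : BS1m1) : ∃ m n : ℤ, g = bsA ^ m * bsB ^ n := by
  have hg : g ∈ Subgroup.closure (Set.range PresentedGroup.of) := by
    rw [PresentedGroup.closure_range_of]; trivial
  induction hg using Subgroup.closure_induction_left with
  | one => exact ⟨0, 0, by simp⟩
  | mul_left _ hs _ _ ih =>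
    obtain ⟨i, rfl⟩ := hs
    obtain ⟨m, n, rfl⟩ := ih
    cases i
    · exact ⟨1 + m, n, by rw [zpow_add, zpow_one, mul_assoc]; rfl⟩
    · refine ⟨-m, n + 1, ?_⟩
      change bsB * (bsA ^ m * bsB ^ n) = _
      rw [← mul_assoc, bsB_semiconjBy_bsA.mul_zpow_eq_zpow_neg_mul]
      group
  | inv_mul_cancel _ hs _ _ ih =>
    obtain ⟨i, rfl⟩ := hs
    obtain ⟨m, n, rfl⟩ := ih
    cases i
    · exact ⟨-1 + m, n, by rw [zpow_add, zpow_neg_one, mul_assoc]; rfl⟩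
    · refine ⟨-m, n - 1, ?_⟩
      change bsB⁻¹ * (bsA ^ m * bsB ^ n) = _
      rw [← mul_assoc, bsB_semiconjBy_bsA.inv_mul_zpow_eq_zpow_neg_mul]
      group

section Lift

variable {G : Type*} [Group G]

def bsLift (x y : G) (h : SemiconjBy y x x⁻¹) : BS1m1 →* G :=
  PresentedGroup.toGroup (f := fun i => cond i y x) <| by
    rintro _ rfl
    simp only [map_mul, map_inv, FreeGroup.lift_apply_of, cond_true, cond_false]
    rw [h.eq]
    group

theorem bsLift_bsA (x y : G) (h : SemiconjBy y x x⁻¹) : bsLift x y h bsA = x :=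
  PresentedGroup.toGroup.of _

theorem bsLift_bsB (x y : G) (h : SemiconjBy y x x⁻¹) : bsLift x y h bsB = y :=
  PresentedGroup.toGroup.of _

end Lift

theorem not_isOfFinOrder_bsA : ¬IsOfFinOrder bsA := by
  have hsemiconj : SemiconjBy (DihedralGroup.sr 0) (DihedralGroup.r (1 : ZMod 0))
      (DihedralGroup.r 1)⁻¹ := by
    simp [SemiconjBy, DihedralGroup.inv_r]
  refine not_isOfFinOrder_of_map_eq _ (bsLift_bsA _ _ hsemiconj) ?_
  rw [← orderOf_eq_zero_iff, DihedralGroup.orderOf_r_one]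

theorem not_isOfFinOrder_bsB : ¬IsOfFinOrder bsB := by
  refine not_isOfFinOrder_of_map_eq _ (bsLift_bsB 1 (Multiplicative.ofAdd (1 : ℤ)) (by simp)) ?_
  exact not_isOfFinOrder_of_isMulTorsionFree (by decide)

/-- A homomorphism `ρ` from `BS(1,−1)` to a group `H` is non-injective iff there is a positive
integer `p` with `ρ(a)^p = 1` or `ρ(b)^{2p} = 1`. -/
theorem stmt18 {H : Type*} [Group H] (ρ : BS1m1 →* H) :
    ¬ Function.Injective ρ ↔
      ∃ p : ℕ, 0 < p ∧ (ρ bsA ^ p = 1 ∨ ρ bsB ^ (2 * p) = 1) := by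
  rw [exists_pow_eq_one_or_pow_two_mul_eq_one_iff]
  constructor
  · intro hρ
    obtain ⟨g, hg1, hg⟩ : ∃ g, ρ g = 1 ∧ g ≠ 1 := by
      simpa [injective_iff_map_eq_one] using hρ
    obtain ⟨m, n, rfl⟩ := exists_eq_bsA_zpow_mul_bsB_zpow g
    have hsemiconj : SemiconjBy (ρ bsB) (ρ bsA) (ρ bsA)⁻¹ := by
      simpa only [map_inv] using bsB_semiconjBy_bsA.map ρ
    refine hsemiconj.isOfFinOrder_or_of_zpow_mul_zpow_eq_one (by simpa using hg1) ?_
    contrapose! hg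
    simp [hg]
  · rintro (hfin | hfin) hρ
    exacts [not_isOfFinOrder_bsA (hρ.isOfFinOrder_iff.1 hfin),
      not_isOfFinOrder_bsB (hρ.isOfFinOrder_iff.1 hfin)]
end
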